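/- arXiv:2301.00506 — 4 statements merged into one kernel-verified Lean document; each statement's English description precedes it below -/
import Mathlib

section
/- Let $d \in \mathbb{N}$, $1 < q_1, q_2 \le \infty$, $0 < r_1, r_2 \le \infty$, $s_1, s_2 \in \mathbb{R}$, with $r_i = \infty$ whenever $q_i = \infty$. Suppose there is a constant $C > 0$ with $\|e^{t\Delta} f\|_{L^{q_2,r_2}_{s_2}} \le C t^{-\frac{d}{2}(\frac{1}{q_1}-\frac{1}{q_2}) - \frac{s_1-s_2}{2}} \|f\|_{L^{q_1,r_1}_{s_1}}$ for all $t > 0$ and $f \in L^{q_1,r_1}_{s_1}(\mathbb{R}^d)$. Then $s_2 \le s_1$. -/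
open MeasureTheory Set Filter ENNReal

noncomputable section

/-- Distribution function of `f` with respect to Lebesgue measure. -/
def distFn {d : ℕ} (f : EuclideanSpace ℝ (Fin d) → ℝ) (lam : ℝ) : ℝ≥0∞ :=
  volume {x | lam < |f x|}

/-- Decreasing rearrangement of `f`. -/
def rearr {d : ℕ} (f : EuclideanSpace ℝ (Fin d) → ℝ) (t : ℝ) : ℝ :=
  sInf {lam : ℝ | 0 < lam ∧ distFn f lam ≤ ENNReal.ofReal t}

/-- Lorentz quasi-norm `‖f‖_{L^{q,r}}` (with `q, r ∈ (0,∞]`). -/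
def lorentzNorm {d : ℕ} (q r : ℝ≥0∞) (f : EuclideanSpace ℝ (Fin d) → ℝ) : ℝ≥0∞ :=
  if r = ⊤ then ⨆ t ∈ Set.Ioi (0:ℝ), ENNReal.ofReal (t ^ q.toReal⁻¹ * rearr f t)
  else (∫⁻ t in Set.Ioi (0:ℝ),
      ENNReal.ofReal ((t ^ q.toReal⁻¹ * rearr f t) ^ r.toReal / t)) ^ r.toReal⁻¹

/-- Weighted Lorentz quasi-norm `‖|x|^s f‖_{L^{q,r}}`. -/
def wLorentz {d : ℕ} (q r : ℝ≥0∞) (s : ℝ) (f : EuclideanSpace ℝ (Fin d) → ℝ) : ℝ≥0∞ :=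
  lorentzNorm q r fun x => ‖x‖ ^ s * f x

/-- Gaussian heat kernel `G_t`. -/
def gauss (d : ℕ) (t : ℝ) (x : EuclideanSpace ℝ (Fin d)) : ℝ :=
  (4 * Real.pi * t) ^ (-(d:ℝ)/2) * Real.exp (-‖x‖^2 / (4*t))

/-- Heat semigroup `e^{tΔ} f = G_t * f`. -/
def heat {d : ℕ} (t : ℝ) (f : EuclideanSpace ℝ (Fin d) → ℝ)
    (x : EuclideanSpace ℝ (Fin d)) : ℝ :=
  ∫ y, gauss d t (x - y) * f y

end

/-!
Test the estimate at `t = 1` on the indicator `f` of the unit ball around `τ e₁`. On that ball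
`‖x‖` lies between `τ / 2` and `2 τ`, so `‖f‖_{L^{q₁,r₁}_{s₁}} ≲ τ ^ s₁`, while `e^{Δ} f` is
bounded below by a constant there, so `‖e^{Δ} f‖_{L^{q₂,r₂}_{s₂}} ≳ τ ^ s₂`. The estimate then
gives `τ ^ s₂ ≲ τ ^ s₁` for all large `τ`, which forces `s₂ ≤ s₁`.
-/

open Metric

section Rearrangement

variable {d : ℕ} {g : EuclideanSpace ℝ (Fin d) → ℝ}

lemma rearr_nonneg (g : EuclideanSpace ℝ (Fin d) → ℝ) (t : ℝ) : 0 ≤ rearr g t :=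
  Real.sInf_nonneg fun _ hl => hl.1.le

lemma rearr_le_of_abs_le {a : ℝ} (t : ℝ) (ha : 0 < a) (hg : ∀ x, |g x| ≤ a) :
    rearr g t ≤ a := by
  refine csInf_le ⟨0, fun _ hl => hl.1.le⟩ ⟨ha, ?_⟩
  have : {x | a < |g x|} = ∅ := eq_empty_of_forall_notMem fun x hx => (hx.trans_le (hg x)).false
  simp [distFn, this]

lemma rearr_eq_zero_of_volume_support_le {m t : ℝ}
    (h : volume {x | g x ≠ 0} ≤ ENNReal.ofReal m) (ht : m ≤ t) : rearr g t = 0 := by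
  have hset : {l : ℝ | 0 < l ∧ distFn g l ≤ ENNReal.ofReal t} = Ioi 0 := by
    refine Set.ext fun l => and_iff_left_of_imp fun hl => ?_
    refine (measure_mono fun x hx => ?_).trans (h.trans (ENNReal.ofReal_le_ofReal ht))
    exact fun h0 => by simp [h0] at hx; linarith [hx]
  rw [rearr, hset, csInf_Ioi]

lemma distFn_le_of_abs_le_of_notMem {l : ℝ} {B : Set (EuclideanSpace ℝ (Fin d))}
    (h : ∀ x ∉ B, |g x| ≤ l) : distFn g l ≤ volume B :=
  measure_mono fun x (hx : l < |g x|) => by_contra fun hxB => (hx.trans_le (h x hxB)).false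

lemma exists_distFn_le (hg : Measurable g) {l₀ : ℝ} (hfin : distFn g l₀ ≠ ⊤) {t : ℝ}
    (ht : 0 < t) : ∃ l, 0 < l ∧ distFn g l ≤ ENNReal.ofReal t := by
  let l : ℕ → ℝ := fun n => |l₀| + 1 + n
  have hanti : Antitone fun n => {x | l n < |g x|} := fun i j hij x (hx : l j < |g x|) =>
    show l i < |g x| from lt_of_le_of_lt (by simp only [l]; gcongr) hx
  have hempty : ⋂ n, {x | l n < |g x|} = ∅ := by
    refine eq_empty_of_forall_notMem fun x hx => ?_
    obtain ⟨n, hn⟩ := exists_nat_ge |g x|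
    have hxn : l n < |g x| := mem_iInter.1 hx n
    simp only [l] at hxn
    linarith [abs_nonneg l₀]
  have hmeas : ∀ n, NullMeasurableSet {x | l n < |g x|} volume := fun n =>
    (measurableSet_lt measurable_const hg.abs).nullMeasurableSet
  have hfin0 : volume {x | l 0 < |g x|} ≠ ⊤ :=
    ne_top_of_le_ne_top hfin <| measure_mono fun x (hx : l 0 < |g x|) =>
      show l₀ < |g x| from lt_of_le_of_lt (by simp [l]; linarith [le_abs_self l₀]) hx
  have hlim := tendsto_measure_iInter_atTop hmeas hanti ⟨0, hfin0⟩
  rw [hempty, measure_empty] at hlim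
  obtain ⟨n, hn⟩ := (hlim.eventually (gt_mem_nhds (ENNReal.ofReal_pos.2 ht))).exists
  exact ⟨l n, by positivity, hn.le⟩

-- Without `hfin` the set whose infimum is `rearr g t` may be empty, and `sInf ∅ = 0`.
lemma le_rearr_of_le_abs (hg : Measurable g) {l₀ : ℝ} (hfin : distFn g l₀ ≠ ⊤)
    {c t : ℝ} (ht : 0 < t) {A : Set (EuclideanSpace ℝ (Fin d))}
    (hA : ENNReal.ofReal t < volume A) (hcA : ∀ x ∈ A, c ≤ |g x|) : c ≤ rearr g t := by
  refine le_csInf (exists_distFn_le hg hfin ht) fun l ⟨_, hl⟩ => not_lt.1 fun hlc => ?_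
  exact (hA.trans_le ((measure_mono fun x hx => hlc.trans_le (hcA x hx)).trans hl)).false

end Rearrangement

section Lorentz

variable {d : ℕ} {g : EuclideanSpace ℝ (Fin d) → ℝ} {q r : ℝ≥0∞} {m : ℝ}

/-- `lorentzNorm q r` of the indicator of a set of measure `m`. -/
noncomputable def lorentzConst (q r : ℝ≥0∞) (m : ℝ) : ℝ≥0∞ :=
  if r = ⊤ then ENNReal.ofReal (m ^ q.toReal⁻¹)
  else (∫⁻ t in Ioo 0 m, ENNReal.ofReal (t ^ (q.toReal⁻¹ * r.toReal - 1))) ^ r.toReal⁻¹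

lemma lorentzConst_pos (hm : 0 < m) : 0 < lorentzConst q r m := by
  unfold lorentzConst
  split_ifs
  · exact ENNReal.ofReal_pos.2 (Real.rpow_pos_of_pos hm _)
  · refine ENNReal.rpow_pos_of_nonneg ((setLIntegral_pos_iff (by fun_prop)).2 ?_) (by positivity)
    have : Function.support (fun t : ℝ => ENNReal.ofReal (t ^ (q.toReal⁻¹ * r.toReal - 1)))
        ∩ Ioo 0 m = Ioo 0 m :=
      inter_eq_right.2 fun t ht => (ENNReal.ofReal_pos.2 (Real.rpow_pos_of_pos ht.1 _)).ne'
    simpa [this] using hm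

lemma lorentzConst_lt_top (hq : 0 < q) (hr : 0 < r) (hinf : q = ⊤ → r = ⊤) (hm : 0 < m) :
    lorentzConst q r m < ⊤ := by
  unfold lorentzConst
  split_ifs with hrt
  · exact ofReal_lt_top
  · have hq₀ : 0 < q.toReal := ENNReal.toReal_pos hq.ne' fun hqt => hrt (hinf hqt)
    have hr₀ : 0 < r.toReal := ENNReal.toReal_pos hr.ne' hrt
    have hint : IntegrableOn (fun t : ℝ => t ^ (q.toReal⁻¹ * r.toReal - 1)) (Ioo 0 m) :=
      (intervalIntegral.integrableOn_Ioo_rpow_iff hm).2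
        (by have := mul_pos (inv_pos.2 hq₀) hr₀; linarith)
    refine ENNReal.rpow_lt_top_of_nonneg (by positivity) (ne_top_of_le_ne_top hint.2.ne ?_)
    exact lintegral_mono fun t => ENNReal.ofReal_le_of_le_toReal (by simp [le_abs_self])

lemma rpow_mul_rpow_div_self {t b : ℝ} (ht : 0 < t) (hb : 0 ≤ b) (e r : ℝ) :
    (t ^ e * b) ^ r / t = b ^ r * t ^ (e * r - 1) := by
  rw [Real.mul_rpow (by positivity) hb, ← Real.rpow_mul ht.le, Real.rpow_sub ht, Real.rpow_one]
  ring

lemma ofReal_rpow_mul_rpow_inv {a r : ℝ} (ha : 0 ≤ a) (hr : 0 < r) (I : ℝ≥0∞) :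
    (ENNReal.ofReal (a ^ r) * I) ^ r⁻¹ = ENNReal.ofReal a * I ^ r⁻¹ := by
  rw [ENNReal.mul_rpow_of_nonneg _ _ (by positivity), ENNReal.ofReal_rpow_of_nonneg (by positivity)
    (by positivity), Real.rpow_rpow_inv ha hr.ne']

lemma lintegral_Ioo_ofReal_const_mul {c γ : ℝ} (hc : 0 ≤ c) :
    ∫⁻ t in Ioo 0 m, ENNReal.ofReal (c * t ^ γ)
      = ENNReal.ofReal c * ∫⁻ t in Ioo 0 m, ENNReal.ofReal (t ^ γ) := by
  simp_rw [ENNReal.ofReal_mul hc]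
  exact lintegral_const_mul' _ _ ofReal_ne_top

lemma lorentzNorm_le {a : ℝ} (hr : 0 < r) (ha : 0 ≤ a) (hm : 0 < m)
    (hbd : ∀ t, rearr g t ≤ a) (hz : ∀ t, m ≤ t → rearr g t = 0) :
    lorentzNorm q r g ≤ ENNReal.ofReal a * lorentzConst q r m := by
  rw [lorentzNorm, lorentzConst]
  split_ifs with hrt
  · rw [← ENNReal.ofReal_mul ha]
    refine iSup₂_le fun t (ht : 0 < t) => ENNReal.ofReal_le_ofReal ?_
    rcases lt_or_ge t m with htm | htm
    · rw [mul_comm a]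
      exact mul_le_mul (Real.rpow_le_rpow ht.le htm.le (by positivity)) (hbd t)
        (rearr_nonneg g t) (by positivity)
    · rw [hz t htm, mul_zero]
      positivity
  · have hr₀ : 0 < r.toReal := ENNReal.toReal_pos hr.ne' hrt
    rw [← ofReal_rpow_mul_rpow_inv ha hr₀, ← lintegral_Ioo_ofReal_const_mul (by positivity),
      ← inter_eq_left.2 (Ioo_subset_Ioi_self : Ioo 0 m ⊆ Ioi 0),
      ← setLIntegral_indicator measurableSet_Ioo]
    refine ENNReal.rpow_le_rpow (setLIntegral_mono' measurableSet_Ioi fun t (ht : 0 < t) => ?_)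
      (by positivity)
    rw [rpow_mul_rpow_div_self ht (rearr_nonneg g t)]
    rcases lt_or_ge t m with htm | htm
    · rw [indicator_of_mem (show t ∈ Ioo 0 m from ⟨ht, htm⟩)]
      gcongr
      exacts [rearr_nonneg g t, hbd t]
    · rw [hz t htm, Real.zero_rpow hr₀.ne', zero_mul, ENNReal.ofReal_zero]
      exact zero_le

lemma le_lorentzNorm {c : ℝ} (hr : 0 < r) (hc : 0 ≤ c) (hm : 0 < m)
    (hlow : ∀ t ∈ Ioc 0 m, c ≤ rearr g t) :
    lorentzConst q r m * ENNReal.ofReal c ≤ lorentzNorm q r g := by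
  rw [lorentzNorm, lorentzConst]
  split_ifs with hrt
  · rw [← ENNReal.ofReal_mul (by positivity)]
    refine le_trans ?_ (le_biSup _ (show m ∈ Ioi 0 from hm))
    exact ENNReal.ofReal_le_ofReal (by gcongr; exact hlow m ⟨hm, le_rfl⟩)
  · have hr₀ : 0 < r.toReal := ENNReal.toReal_pos hr.ne' hrt
    rw [mul_comm, ← ofReal_rpow_mul_rpow_inv hc hr₀,
      ← lintegral_Ioo_ofReal_const_mul (by positivity)]
    have hsub : Ioo 0 m ⊆ Ioi 0 := Ioo_subset_Ioi_self
    refine ENNReal.rpow_le_rpow (le_trans ?_ (lintegral_mono_set hsub)) (by positivity)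
    refine setLIntegral_mono' measurableSet_Ioo fun t ht => ?_
    rw [rpow_mul_rpow_div_self ht.1 (rearr_nonneg g t)]
    have := Real.rpow_nonneg ht.1.le (q.toReal⁻¹ * r.toReal - 1)
    gcongr
    exact hlow t (Ioo_subset_Ioc_self ht)

end Lorentz

section Heat

open Real

variable {d : ℕ} {t : ℝ} {A : Set (EuclideanSpace ℝ (Fin d))}

lemma continuous_gauss (d : ℕ) (t : ℝ) : Continuous (gauss d t) := by
  unfold gauss
  fun_prop

lemma gauss_nonneg (ht : 0 ≤ t) (z : EuclideanSpace ℝ (Fin d)) : 0 ≤ gauss d t z := by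
  unfold gauss
  positivity

lemma gauss_le (ht : 0 < t) (z : EuclideanSpace ℝ (Fin d)) :
    gauss d t z ≤ (4 * π * t) ^ (-(d : ℝ) / 2) := by
  refine mul_le_of_le_one_right (by positivity) (exp_le_one_iff.2 ?_)
  exact div_nonpos_of_nonpos_of_nonneg (neg_nonpos.2 (by positivity)) (by positivity)

lemma le_gauss (ht : 0 < t) {R : ℝ} {z : EuclideanSpace ℝ (Fin d)} (hz : ‖z‖ ≤ R) :
    (4 * π * t) ^ (-(d : ℝ) / 2) * exp (-R ^ 2 / (4 * t)) ≤ gauss d t z := by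
  unfold gauss
  gcongr

lemma measurable_heat {f : EuclideanSpace ℝ (Fin d) → ℝ} (hf : Measurable f) :
    Measurable (heat t f) :=
  (((continuous_gauss d t).measurable.comp measurable_sub).mul
    (hf.comp measurable_snd)).stronglyMeasurable.integral_prod_right'.measurable

lemma heat_indicator_one (hA : MeasurableSet A) (x : EuclideanSpace ℝ (Fin d)) :
    heat t (A.indicator fun _ => 1) x = ∫ y in A, gauss d t (x - y) := by
  rw [heat, ← integral_indicator hA]
  congr 1 with y
  by_cases hy : y ∈ A <;> simp [hy]

lemma heat_indicator_nonneg (ht : 0 ≤ t) (hA : MeasurableSet A) (x : EuclideanSpace ℝ (Fin d)) :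
    0 ≤ heat t (A.indicator fun _ => 1) x := by
  rw [heat_indicator_one hA]
  exact setIntegral_nonneg hA fun y _ => gauss_nonneg ht _

lemma heat_indicator_le (ht : 0 < t) (hA : MeasurableSet A) (hAfin : volume A < ⊤)
    (x : EuclideanSpace ℝ (Fin d)) :
    heat t (A.indicator fun _ => 1) x ≤ (4 * π * t) ^ (-(d : ℝ) / 2) * volume.real A := by
  rw [heat_indicator_one hA]
  refine (le_norm_self _).trans (norm_setIntegral_le_of_norm_le_const hAfin fun y _ => ?_)
  rw [norm_of_nonneg (gauss_nonneg ht.le _)]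
  exact gauss_le ht _

lemma le_heat_indicator (ht : 0 < t) (hA : MeasurableSet A) (hAfin : volume A < ⊤)
    {x : EuclideanSpace ℝ (Fin d)} {R : ℝ} (hxA : ∀ y ∈ A, ‖x - y‖ ≤ R) :
    (4 * π * t) ^ (-(d : ℝ) / 2) * exp (-R ^ 2 / (4 * t)) * volume.real A
      ≤ heat t (A.indicator fun _ => 1) x := by
  rw [heat_indicator_one hA]
  refine setIntegral_ge_of_const_le_real hA hAfin.ne (fun y hy => le_gauss ht (hxA y hy)) ?_
  refine Measure.integrableOn_of_bounded hAfin.ne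
    ((continuous_gauss d t).comp (continuous_sub_left x)).aestronglyMeasurable
    (M := (4 * π * t) ^ (-(d : ℝ) / 2)) (Eventually.of_forall fun y => ?_)
  rw [norm_of_nonneg (gauss_nonneg ht.le _)]
  exact gauss_le ht _

lemma rpow_le_exp_mul {z s : ℝ} (hz : 0 ≤ z) (hs : 0 ≤ s) : z ^ s ≤ exp (s * z) := by
  rcases hz.eq_or_lt with rfl | hz
  · rcases hs.eq_or_lt with rfl | hs
    · simp
    · rw [zero_rpow hs.ne']
      positivity
  · rw [rpow_def_of_pos hz, mul_comm]
    gcongr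
    linarith [log_le_sub_one_of_pos hz]

lemma rpow_norm_mul_heat_indicator_le {s : ℝ} (hs : 0 ≤ s) (ht : 0 < t) (hA : MeasurableSet A)
    (hAfin : volume A < ⊤) {ρ : ℝ} (hAρ : ∀ y ∈ A, ‖y‖ ≤ ρ) (x : EuclideanSpace ℝ (Fin d)) :
    ‖x‖ ^ s * heat t (A.indicator fun _ => 1) x
      ≤ (4 * π * t) ^ (-(d : ℝ) / 2) * exp (s * ρ + t * s ^ 2) * volume.real A := by
  rw [heat_indicator_one hA, ← integral_const_mul]
  refine (le_norm_self _).trans (norm_setIntegral_le_of_norm_le_const hAfin fun y hy => ?_)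
  rw [norm_of_nonneg (mul_nonneg (by positivity) (gauss_nonneg ht.le _))]
  set a := ‖x - y‖
  have hx : ‖x‖ ≤ a + ρ := (norm_le_norm_add_norm_sub' x y).trans (by linarith [hAρ y hy])
  have hexp : s * (a + ρ) + -a ^ 2 / (4 * t) ≤ s * ρ + t * s ^ 2 := by
    have : -a ^ 2 / (4 * t) ≤ t * s ^ 2 - s * a := by
      rw [div_le_iff₀ (by positivity)]
      nlinarith [sq_nonneg (a - 2 * t * s)]
    linarith
  calc ‖x‖ ^ s * gauss d t (x - y)
      ≤ exp (s * (a + ρ)) * gauss d t (x - y) := by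
        gcongr
        · exact gauss_nonneg ht.le _
        · exact (rpow_le_rpow (norm_nonneg x) hx hs).trans
            (rpow_le_exp_mul ((norm_nonneg x).trans hx) hs)
    _ = (4 * π * t) ^ (-(d : ℝ) / 2) * exp (s * (a + ρ) + -a ^ 2 / (4 * t)) := by
        rw [gauss, exp_add]
        ring
    _ ≤ (4 * π * t) ^ (-(d : ℝ) / 2) * exp (s * ρ + t * s ^ 2) := by gcongr

end Heat

section Translates

open Real

variable {d : ℕ}

lemma rpow_le_two_rpow_abs_mul_rpow {x y : ℝ} (hy : 0 < y) (hx : y / 2 ≤ x) (hx' : x ≤ 2 * y)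
    (s : ℝ) : x ^ s ≤ 2 ^ |s| * y ^ s := by
  rcases le_or_gt 0 s with hs | hs
  · rw [abs_of_nonneg hs, ← mul_rpow (by norm_num) hy.le]
    exact rpow_le_rpow (by linarith) hx' hs
  · rw [abs_of_neg hs, Real.rpow_neg (by norm_num), ← div_eq_inv_mul,
      ← div_rpow hy.le (by norm_num)]
    exact rpow_le_rpow_of_nonpos (by positivity) hx hs.le

lemma norm_bounds_of_mem_ball {E : Type*} [SeminormedAddCommGroup E] {p x : E} (hp : 2 ≤ ‖p‖)
    (hx : x ∈ ball p 1) : ‖p‖ / 2 ≤ ‖x‖ ∧ ‖x‖ ≤ 2 * ‖p‖ := by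
  have := abs_le.1 ((abs_norm_sub_norm_le x p).trans (mem_ball_iff_norm.1 hx).le)
  constructor <;> linarith

lemma rpow_norm_le_of_mem_ball {E : Type*} [SeminormedAddCommGroup E] {p x : E} (hp : 2 ≤ ‖p‖)
    (hx : x ∈ ball p 1) (s : ℝ) : ‖x‖ ^ s ≤ 2 ^ |s| * ‖p‖ ^ s :=
  have := norm_bounds_of_mem_ball hp hx
  rpow_le_two_rpow_abs_mul_rpow (by linarith) this.1 this.2 s

lemma le_rpow_norm_of_mem_ball {E : Type*} [SeminormedAddCommGroup E] {p x : E} (hp : 2 ≤ ‖p‖)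
    (hx : x ∈ ball p 1) (s : ℝ) : 2 ^ (-|s|) * ‖p‖ ^ s ≤ ‖x‖ ^ s := by
  obtain ⟨hx₁, hx₂⟩ := norm_bounds_of_mem_ball hp hx
  have := rpow_le_two_rpow_abs_mul_rpow (x := ‖p‖) (by linarith) (by linarith) (by linarith) s
  rw [Real.rpow_neg (by norm_num), inv_mul_le_iff₀ (by positivity)]
  exact this

lemma volume_ball_eq_ofReal (p : EuclideanSpace ℝ (Fin d)) (ρ : ℝ) :
    volume (ball p ρ) = ENNReal.ofReal (volume.real (ball (0 : EuclideanSpace ℝ (Fin d)) ρ)) := by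
  rw [Measure.addHaar_ball_center, measureReal_def, ofReal_toReal measure_ball_lt_top.ne]

lemma volume_real_ball_pos (ρ : ℝ) (hρ : 0 < ρ) :
    0 < volume.real (ball (0 : EuclideanSpace ℝ (Fin d)) ρ) :=
  ENNReal.toReal_pos (measure_ball_pos volume 0 hρ).ne' measure_ball_lt_top.ne

lemma exists_wLorentz_indicator_ball_le {q r : ℝ≥0∞} (hq : 0 < q) (hr : 0 < r)
    (hinf : q = ⊤ → r = ⊤) (s : ℝ) :
    ∃ A : ℝ, ∀ p : EuclideanSpace ℝ (Fin d), 2 ≤ ‖p‖ →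
      wLorentz q r s ((ball p 1).indicator fun _ => 1) ≤ ENNReal.ofReal (A * ‖p‖ ^ s) := by
  set m := volume.real (ball (0 : EuclideanSpace ℝ (Fin d)) 1)
  have hm : 0 < m := volume_real_ball_pos 1 one_pos
  refine ⟨2 ^ |s| * (lorentzConst q r m).toReal, fun p hp => ?_⟩
  have hbd : ∀ x, |‖x‖ ^ s * (ball p 1).indicator (fun _ => (1 : ℝ)) x| ≤ 2 ^ |s| * ‖p‖ ^ s := by
    intro x
    by_cases hx : x ∈ ball p 1
    · rw [indicator_of_mem hx, mul_one, abs_of_nonneg (by positivity)]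
      exact rpow_norm_le_of_mem_ball hp hx s
    · rw [indicator_of_notMem hx, mul_zero, abs_zero]
      positivity
  have hsupp : volume {x | ‖x‖ ^ s * (ball p 1).indicator (fun _ => (1 : ℝ)) x ≠ 0}
      ≤ ENNReal.ofReal m := by
    rw [← volume_ball_eq_ofReal p]
    exact measure_mono fun x hx => by_contra fun hxB => hx (by simp [indicator_of_notMem hxB])
  calc wLorentz q r s ((ball p 1).indicator fun _ => 1)
      ≤ ENNReal.ofReal (2 ^ |s| * ‖p‖ ^ s) * lorentzConst q r m :=
        lorentzNorm_le hr (by positivity) hm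
          (fun t => rearr_le_of_abs_le t
            (mul_pos (by positivity) (rpow_pos_of_pos (by linarith) _)) hbd)
          (fun t ht => rearr_eq_zero_of_volume_support_le hsupp ht)
    _ = ENNReal.ofReal (2 ^ |s| * (lorentzConst q r m).toReal * ‖p‖ ^ s) := by
        rw [← ofReal_toReal (lorentzConst_lt_top hq hr hinf hm).ne, ← ENNReal.ofReal_mul
          (by positivity), toReal_ofReal toReal_nonneg]
        ring_nf

lemma exists_distFn_rpow_norm_mul_heat_indicator_ball_ne_top (s : ℝ)
    (p : EuclideanSpace ℝ (Fin d)) :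
    ∃ l, distFn (fun x => ‖x‖ ^ s * heat 1 ((ball p 1).indicator fun _ => 1) x) l ≠ ⊤ := by
  have hheat := heat_indicator_nonneg zero_le_one (measurableSet_ball (x := p) (ε := 1))
  have habs : ∀ x, |‖x‖ ^ s * heat 1 ((ball p 1).indicator fun _ => 1) x|
      = ‖x‖ ^ s * heat 1 ((ball p 1).indicator fun _ => 1) x := fun x =>
    abs_of_nonneg (mul_nonneg (by positivity) (hheat x))
  rcases le_or_gt 0 s with hs | hs
  · have hAρ : ∀ y ∈ ball p 1, ‖y‖ ≤ ‖p‖ + 1 := fun y hy =>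
      (norm_le_norm_add_norm_sub' y p).trans (by linarith [(mem_ball_iff_norm.1 hy).le])
    exact ⟨_, ne_top_of_le_ne_top ((measure_empty (μ := volume)).trans_ne zero_ne_top)
      (distFn_le_of_abs_le_of_notMem fun x _ => (habs x).trans_le
        (rpow_norm_mul_heat_indicator_le hs one_pos measurableSet_ball measure_ball_lt_top hAρ x))⟩
  · have hx₁ : ∀ x ∉ ball (0 : EuclideanSpace ℝ (Fin d)) 1, ‖x‖ ^ s ≤ 1 := fun x hx =>
      rpow_le_one_of_one_le_of_nonpos (by simpa using hx) hs.le
    exact ⟨_, ne_top_of_le_ne_top measure_ball_lt_top.ne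
      (distFn_le_of_abs_le_of_notMem fun x hx => (habs x).trans_le
        ((mul_le_of_le_one_left (hheat x) (hx₁ x hx)).trans
          (heat_indicator_le one_pos measurableSet_ball measure_ball_lt_top x)))⟩

lemma exists_le_wLorentz_heat_indicator_ball {q r : ℝ≥0∞} (hr : 0 < r) (s : ℝ) :
    ∃ B > 0, ∀ p : EuclideanSpace ℝ (Fin d), 2 ≤ ‖p‖ →
      ENNReal.ofReal (B * ‖p‖ ^ s) ≤ wLorentz q r s (heat 1 ((ball p 1).indicator fun _ => 1)) := by
  set m := volume.real (ball (0 : EuclideanSpace ℝ (Fin d)) 1)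
  have hm : 0 < m := volume_real_ball_pos 1 one_pos
  obtain ⟨κ, hκ, hκ₀, hκK⟩ :=
    ENNReal.lt_iff_exists_real_btwn.1 (lorentzConst_pos (q := q) (r := r) (half_pos hm))
  set c₀ := (4 * π * 1) ^ (-(d : ℝ) / 2) * exp (-2 ^ 2 / (4 * 1)) * m
  have hκ' : 0 < κ := ENNReal.ofReal_pos.1 hκ₀
  refine ⟨κ * 2 ^ (-|s|) * c₀, by positivity, fun p hp => ?_⟩
  have hvol : volume.real (ball p 1) = m := by
    rw [measureReal_def, volume_ball_eq_ofReal p, toReal_ofReal hm.le]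
  have hw : Measurable fun x => ‖x‖ ^ s * heat 1 ((ball p 1).indicator fun _ => 1) x :=
    (measurable_norm.pow_const s).mul
      (measurable_heat (measurable_const.indicator measurableSet_ball))
  have hlow : ∀ x ∈ ball p 1,
      2 ^ (-|s|) * ‖p‖ ^ s * c₀ ≤ |‖x‖ ^ s * heat 1 ((ball p 1).indicator fun _ => 1) x| := by
    intro x hx
    have hxy : ∀ y ∈ ball p 1, ‖x - y‖ ≤ 2 := fun y hy => by
      rw [← dist_eq_norm]
      linarith [dist_triangle_right x y p, mem_ball.1 hx, mem_ball.1 hy]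
    have hheat := le_heat_indicator one_pos measurableSet_ball measure_ball_lt_top hxy
    rw [hvol] at hheat
    rw [abs_of_nonneg (mul_nonneg (by positivity)
      (heat_indicator_nonneg zero_le_one measurableSet_ball x))]
    exact mul_le_mul (le_rpow_norm_of_mem_ball hp hx s) hheat (by positivity) (by positivity)
  obtain ⟨l₀, hl₀⟩ := exists_distFn_rpow_norm_mul_heat_indicator_ball_ne_top s p
  have hrearr : ∀ t ∈ Ioc 0 (m / 2), 2 ^ (-|s|) * ‖p‖ ^ s * c₀
      ≤ rearr (fun x => ‖x‖ ^ s * heat 1 ((ball p 1).indicator fun _ => 1) x) t :=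
    fun t ht => le_rearr_of_le_abs hw hl₀ ht.1
      (by rw [volume_ball_eq_ofReal, ENNReal.ofReal_lt_ofReal_iff hm]; linarith [ht.2])
      hlow
  calc ENNReal.ofReal (κ * 2 ^ (-|s|) * c₀ * ‖p‖ ^ s)
      = ENNReal.ofReal κ * ENNReal.ofReal (2 ^ (-|s|) * ‖p‖ ^ s * c₀) := by
        rw [← ENNReal.ofReal_mul hκ]
        ring_nf
    _ ≤ lorentzConst q r (m / 2) * ENNReal.ofReal (2 ^ (-|s|) * ‖p‖ ^ s * c₀) := by
        gcongr
    _ ≤ wLorentz q r s (heat 1 ((ball p 1).indicator fun _ => 1)) :=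
        le_lorentzNorm hr (by positivity) (half_pos hm) hrearr

end Translates

lemma le_of_eventually_mul_rpow_le {s₁ s₂ A B : ℝ} (hB : 0 < B)
    (h : ∀ᶠ τ in atTop, B * τ ^ s₂ ≤ A * τ ^ s₁) : s₂ ≤ s₁ := by
  by_contra! hs
  obtain ⟨τ, hτ, hτA, hτ₀⟩ := (h.and (((tendsto_rpow_atTop (sub_pos.2 hs)).eventually_gt_atTop
    (A / B)).and (eventually_gt_atTop 0))).exists
  have : A * τ ^ s₁ < B * τ ^ s₂ := by
    rw [← sub_add_cancel s₂ s₁, Real.rpow_add hτ₀, ← mul_assoc]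
    exact mul_lt_mul_of_pos_right ((div_lt_iff₀' hB).1 hτA) (Real.rpow_pos_of_pos hτ₀ _)
  exact (hτ.trans_lt this).false

theorem stmt5_general (d : ℕ) (hd : 0 < d) (q₁ q₂ r₁ r₂ : ℝ≥0∞) (s₁ s₂ : ℝ)
    (hq₁ : 1 < q₁) (hr₁ : 0 < r₁) (hr₂ : 0 < r₂)
    (hinf₁ : q₁ = ⊤ → r₁ = ⊤)
    (C : ℝ) (hC : 0 < C)
    (hbound : ∀ t : ℝ, 0 < t → ∀ f : EuclideanSpace ℝ (Fin d) → ℝ, Measurable f →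
      wLorentz q₂ r₂ s₂ (heat t f)
        ≤ ENNReal.ofReal
            (C * t ^ (-((d:ℝ)/2) * (q₁.toReal⁻¹ - q₂.toReal⁻¹) - (s₁ - s₂)/2)) *
          wLorentz q₁ r₁ s₁ f) :
    s₂ ≤ s₁ := by
  obtain ⟨A, hA⟩ := exists_wLorentz_indicator_ball_le (d := d) (zero_lt_one.trans hq₁) hr₁ hinf₁ s₁
  obtain ⟨B, hB, hB'⟩ := exists_le_wLorentz_heat_indicator_ball (d := d) (q := q₂) hr₂ s₂
  let e : EuclideanSpace ℝ (Fin d) := EuclideanSpace.single ⟨0, hd⟩ 1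
  refine le_of_eventually_mul_rpow_le hB (A := C * A) ?_
  filter_upwards [eventually_ge_atTop 2] with τ hτ
  have hp : ‖τ • e‖ = τ := by simp [e, norm_smul, abs_of_nonneg (by linarith : (0 : ℝ) ≤ τ)]
  have key := (hB' _ (hτ.trans hp.ge)).trans <| (hbound 1 one_pos _
    (measurable_const.indicator measurableSet_ball)).trans
      (mul_le_mul_right (hA _ (hτ.trans hp.ge)) _)
  rw [Real.one_rpow, mul_one, ← ENNReal.ofReal_mul hC.le, hp] at key
  rw [mul_assoc]
  exact ((ENNReal.ofReal_le_ofReal_iff').1 key).resolve_right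
    (not_le.2 (mul_pos hB (Real.rpow_pos_of_pos (by linarith) _)))

/-- necessity of `s₂ ≤ s₁` for the weighted smoothing estimate. -/
theorem stmt5 (d : ℕ) (hd : 0 < d) (q₁ q₂ r₁ r₂ : ℝ≥0∞) (s₁ s₂ : ℝ)
    (hq₁ : 1 < q₁) (hq₂ : 1 < q₂) (hr₁ : 0 < r₁) (hr₂ : 0 < r₂)
    (hinf₁ : q₁ = ⊤ → r₁ = ⊤) (hinf₂ : q₂ = ⊤ → r₂ = ⊤)
    (C : ℝ) (hC : 0 < C)
    (hbound : ∀ t : ℝ, 0 < t → ∀ f : EuclideanSpace ℝ (Fin d) → ℝ, Measurable f →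
      wLorentz q₂ r₂ s₂ (heat t f)
        ≤ ENNReal.ofReal
            (C * t ^ (-((d:ℝ)/2) * (q₁.toReal⁻¹ - q₂.toReal⁻¹) - (s₁ - s₂)/2)) *
          wLorentz q₁ r₁ s₁ f) :
    s₂ ≤ s₁ :=
  stmt5_general d hd q₁ q₂ r₁ r₂ s₁ s₂ hq₁ hr₁ hr₂ hinf₁ C hC hbound
end

section
/- Let $d \ge 3$, $\gamma > -2$, and let $\mathfrak{u}$ be a positive $C^2$ function on $(0,\infty)$ with $\mathfrak{u}(t), \mathfrak{u}'(t) \to 0$ as $t \to \infty$, satisfying $\mathfrak{u}'(t) + (d-2)\mathfrak{u}(t) = \int_t^\infty \mathfrak{u}(\tau)^{\frac{d+\gamma}{d-2}} d\tau$ for all $t > 0$. If $\lim_{t\to\infty} \frac{\mathfrak{u}'(t)}{\mathfrak{u}(t)} = m$ exists with $-(d-2) < m < 0$, then a contradiction follows; hence the limit, if it exists, must equal $0$ or $-(d-2)$. -/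
open MeasureTheory Set Filter ENNReal

/-!
If `u'/u → m < 0`, then `u` decays exponentially, and since the exponent `p = (d+γ)/(d-2)`
exceeds `1`, the tail `∫_t^∞ u^p` is `O(u(t)^p) = o(u(t))`. Dividing the integral equation by
`u(t)` then gives `u'/u + (d-2) → 0`, i.e. `m = -(d-2)`.
-/

open Real Topology

theorem le_mul_exp_of_deriv_le_mul {u u' : ℝ → ℝ} {a t τ : ℝ}
    (hderiv : ∀ s ∈ Ici t, HasDerivAt u (u' s) s) (hle : ∀ s ∈ Ici t, u' s ≤ a * u s)
    (hτ : t ≤ τ) : u τ ≤ u t * exp (a * (τ - t)) := by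
  have hcont : ContinuousOn u (Icc t τ) := fun s hs =>
    (hderiv s hs.1).continuousAt.continuousWithinAt
  have h := le_gronwallBound_of_liminf_deriv_right_le (δ := u t) (ε := 0) hcont
    (fun s hs _ hr => (hderiv s hs.1).hasDerivWithinAt.liminf_right_slope_le hr) le_rfl
    (fun s hs => by simpa using hle s hs.1) τ ⟨hτ, le_rfl⟩
  rwa [gronwallBound_ε0] at h

theorem setIntegral_Ioi_le_of_le_mul_exp {v : ℝ → ℝ} {A a t : ℝ} (ha : a < 0)
    (hv0 : ∀ τ ∈ Ioi t, 0 ≤ v τ) (hv : ∀ τ ∈ Ioi t, v τ ≤ A * exp (a * (τ - t))) :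
    ∫ τ in Ioi t, v τ ≤ A / -a := by
  have hshift : ∀ τ, A * exp (a * (τ - t)) = A * exp (-(a * t)) * exp (a * τ) := fun τ => by
    rw [mul_assoc, ← exp_add]; ring_nf
  have hint : IntegrableOn (fun τ => A * exp (a * (τ - t))) (Ioi t) := by
    simp only [hshift]; exact (integrableOn_exp_mul_Ioi ha t).const_mul _
  calc ∫ τ in Ioi t, v τ ≤ ∫ τ in Ioi t, A * exp (a * (τ - t)) :=
        integral_mono_of_nonneg (ae_restrict_of_forall_mem measurableSet_Ioi hv0) hint
          (ae_restrict_of_forall_mem measurableSet_Ioi hv)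
    _ = A / -a := by
        simp only [hshift]
        rw [integral_const_mul, integral_exp_mul_Ioi ha, mul_div_assoc', mul_neg, mul_assoc,
          ← exp_add, neg_add_cancel, exp_zero, mul_one, neg_div, div_neg]

theorem setIntegral_Ioi_rpow_le_of_deriv_le_mul {u u' : ℝ → ℝ} {a p t : ℝ} (ha : a < 0)
    (hp : 0 < p) (hnonneg : ∀ s ∈ Ici t, 0 ≤ u s) (hderiv : ∀ s ∈ Ici t, HasDerivAt u (u' s) s)
    (hle : ∀ s ∈ Ici t, u' s ≤ a * u s) :
    ∫ τ in Ioi t, u τ ^ p ≤ u t ^ p / -(p * a) := by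
  refine setIntegral_Ioi_le_of_le_mul_exp (mul_neg_of_pos_of_neg hp ha)
    (fun τ hτ => rpow_nonneg (hnonneg τ (Ioi_subset_Ici_self hτ)) p) fun τ hτ => ?_
  calc u τ ^ p ≤ (u t * exp (a * (τ - t))) ^ p :=
        rpow_le_rpow (hnonneg τ (Ioi_subset_Ici_self hτ)) (le_mul_exp_of_deriv_le_mul hderiv hle hτ.le) hp.le
    _ = u t ^ p * exp (p * a * (τ - t)) := by
        rw [mul_rpow (hnonneg t self_mem_Ici) (exp_pos _).le, ← exp_mul]
        ring_nf

theorem tendsto_setIntegral_Ioi_rpow_div_self {u u' : ℝ → ℝ} {m p : ℝ} (hp : 1 < p)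
    (hm : m < 0) (hpos : ∀ᶠ t in atTop, 0 < u t) (hderiv : ∀ᶠ t in atTop, HasDerivAt u (u' t) t)
    (hu0 : Tendsto u atTop (𝓝 0)) (hrat : Tendsto (fun t => u' t / u t) atTop (𝓝 m)) :
    Tendsto (fun t => (∫ τ in Ioi t, u τ ^ p) / u t) atTop (𝓝 0) := by
  obtain ⟨T, hT⟩ := (hpos.and (hderiv.and
    (hrat.eventually_lt_const (by linarith : m < m / 2)))).exists_forall_of_atTop
  have hle : ∀ s ≥ T, u' s ≤ m / 2 * u s := fun s hs =>
    ((div_lt_iff₀ (hT s hs).1).1 (hT s hs).2.2).le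
  have hlower : ∀ t ≥ T, 0 ≤ (∫ τ in Ioi t, u τ ^ p) / u t := fun t ht =>
    div_nonneg (setIntegral_nonneg measurableSet_Ioi fun τ hτ =>
      rpow_nonneg (hT τ (ht.trans (le_of_lt hτ))).1.le p) (hT t ht).1.le
  have hupper : ∀ t ≥ T, (∫ τ in Ioi t, u τ ^ p) / u t ≤ u t ^ (p - 1) / -(p * (m / 2)) := by
    intro t ht
    have hint := setIntegral_Ioi_rpow_le_of_deriv_le_mul (a := m / 2) (p := p) (by linarith) (by linarith)
      (fun s hs => (hT s (ht.trans hs)).1.le) (fun s hs => (hT s (ht.trans hs)).2.1)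
      (fun s hs => hle s (ht.trans hs))
    rw [rpow_sub_one (hT t ht).1.ne', div_right_comm]
    exact div_le_div_of_nonneg_right hint (hT t ht).1.le
  have hlim : Tendsto (fun t => u t ^ (p - 1) / -(p * (m / 2))) atTop (𝓝 0) := by
    simpa [zero_rpow (sub_pos.2 hp).ne'] using
      (hu0.rpow_const (Or.inr (sub_pos.2 hp).le)).div_const (-(p * (m / 2)))
  exact tendsto_of_tendsto_of_tendsto_of_le_of_le' tendsto_const_nhds hlim
    (eventually_atTop.2 ⟨T, hlower⟩) (eventually_atTop.2 ⟨T, hupper⟩)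

theorem stmt13_general (d : ℕ) (hd : 3 ≤ d) (γ : ℝ) (hγ : -2 < γ) (m : ℝ)
    (u u' : ℝ → ℝ)
    (hpos : ∀ t ∈ Set.Ioi (0:ℝ), 0 < u t)
    (hu' : ∀ t ∈ Set.Ioi (0:ℝ), HasDerivAt u (u' t) t)
    (hu0 : Filter.Tendsto u Filter.atTop (nhds 0))
    (hie : ∀ t ∈ Set.Ioi (0:ℝ),
      u' t + ((d:ℝ) - 2) * u t
        = ∫ τ in Set.Ioi t, u τ ^ (((d:ℝ) + γ)/((d:ℝ) - 2)))
    (hrat : Filter.Tendsto (fun t => u' t / u t) Filter.atTop (nhds m))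
    (hm1 : -((d:ℝ) - 2) < m) (hm2 : m < 0) :
    False := by
  have hd2 : (0:ℝ) < d - 2 := by
    have : (3:ℝ) ≤ d := by exact_mod_cast hd
    linarith
  have hp : 1 < ((d:ℝ) + γ) / ((d:ℝ) - 2) := by
    rw [lt_div_iff₀ hd2]
    linarith
  have hev : ∀ᶠ t in atTop, t ∈ Ioi (0:ℝ) := eventually_gt_atTop 0
  have htail := tendsto_setIntegral_Ioi_rpow_div_self hp hm2 (hev.mono hpos) (hev.mono hu') hu0 hrat
  have hsum : Tendsto (fun t => u' t / u t + ((d:ℝ) - 2)) atTop (𝓝 0) :=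
    htail.congr' <| hev.mono fun t ht => by
      rw [← hie t ht, add_div, mul_div_cancel_right₀ _ (hpos t ht).ne']
  have hlim := tendsto_nhds_unique (hrat.add_const ((d:ℝ) - 2)) hsum
  linarith

/-- the logarithmic derivative cannot converge to `m ∈ (-(d-2),0)`. -/
theorem stmt13 (d : ℕ) (hd : 3 ≤ d) (γ : ℝ) (hγ : -2 < γ) (m : ℝ)
    (u u' : ℝ → ℝ)
    (hpos : ∀ t ∈ Set.Ioi (0:ℝ), 0 < u t)
    (hu' : ∀ t ∈ Set.Ioi (0:ℝ), HasDerivAt u (u' t) t)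
    (hu'' : ∀ t ∈ Set.Ioi (0:ℝ), DifferentiableAt ℝ u' t)
    (hu0 : Filter.Tendsto u Filter.atTop (nhds 0))
    (hu'0 : Filter.Tendsto u' Filter.atTop (nhds 0))
    (hie : ∀ t ∈ Set.Ioi (0:ℝ),
      u' t + ((d:ℝ) - 2) * u t
        = ∫ τ in Set.Ioi t, u τ ^ (((d:ℝ) + γ)/((d:ℝ) - 2)))
    (hrat : Filter.Tendsto (fun t => u' t / u t) Filter.atTop (nhds m))
    (hm1 : -((d:ℝ) - 2) < m) (hm2 : m < 0) :
    False :=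
  stmt13_general d hd γ hγ m u u' hpos hu' hu0 hie hrat hm1 hm2
end

section
/- Let $d \ge 3$, $\gamma > -2$, and let $\mathfrak{u}$ be a positive $C^2$ function on $(0,\infty)$ with $\mathfrak{u}(t), \mathfrak{u}'(t) \to 0$ as $t \to \infty$, satisfying $\mathfrak{u}'(t) + (d-2)\mathfrak{u}(t) = \int_t^\infty \mathfrak{u}(\tau)^{\frac{d+\gamma}{d-2}} d\tau$ for all $t > 0$, and $\lim_{t\to\infty}\frac{\mathfrak{u}'(t)}{\mathfrak{u}(t)} = 0$. Then $\lim_{t\to\infty} t^{\frac{d-2}{2+\gamma}} \mathfrak{u}(t) = \left(\frac{(d-2)^2}{2+\gamma}\right)^{\frac{d-2}{2+\gamma}}$. -/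
open MeasureTheory Set Filter ENNReal

/-!
With `p = (d + γ) / (d - 2)` put `ψ t = ∫_t^∞ u^p`, so that `ψ = u' + (d - 2) u` and `ψ' = -u^p`.
Since `u'/u → 0` we get `ψ/u → d - 2`, hence `ψ'/ψ^p → -(d - 2)^(-p)`. Then
`(ψ^(1-p))' → (p - 1)(d - 2)^(-p)`, so `ψ(t)^(1-p) ~ (p - 1)(d - 2)^(-p) t`; this is the rate of `ψ`,
and `u = ψ / (ψ/u)` inherits it.
-/

open Topology Asymptotics

theorem isLittleO_sub_mul_id_of_hasDerivAt {F g : ℝ → ℝ} {L : ℝ}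
    (hF : ∀ᶠ t in atTop, HasDerivAt F (g t) t) (hg : Tendsto g atTop (𝓝 L)) :
    (fun t => F t - L * t) =o[atTop] id := by
  refine isLittleO_iff.2 fun ε hε => ?_
  obtain ⟨T, hT⟩ := eventually_atTop.1
    ((hF.and (hg.eventually (Metric.closedBall_mem_nhds L (half_pos hε)))).and
      (eventually_ge_atTop 0))
  have hmvt : ∀ t ∈ Ici T, ‖(F t - L * t) - (F T - L * T)‖ ≤ ε / 2 * ‖t - T‖ :=
    fun t ht => (convex_Ici T).norm_image_sub_le_of_norm_hasDerivWithin_le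
      (f' := fun s => g s - L)
      (fun s hs => (((hT s hs).1.1.sub ((hasDerivAt_id s).const_mul L)).congr_deriv
        (by simp)).hasDerivWithinAt)
      (fun s hs => by simpa [← dist_eq_norm] using (hT s hs).1.2) self_mem_Ici ht
  have hT₀ : 0 ≤ T := (hT T le_rfl).2
  filter_upwards [eventually_ge_atTop T, eventually_ge_atTop (2 * ‖F T - L * T‖ / ε)]
    with t hTt hCt
  rw [div_le_iff₀' hε] at hCt
  have hgrowth := (norm_sub_norm_le _ _).trans (hmvt t hTt)
  rw [Real.norm_of_nonneg (sub_nonneg.2 hTt)] at hgrowth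
  rw [id, Real.norm_of_nonneg (hT₀.trans hTt)]
  nlinarith [norm_nonneg (F T - L * T)]

theorem tendsto_div_id_of_hasDerivAt {F g : ℝ → ℝ} {L : ℝ}
    (hF : ∀ᶠ t in atTop, HasDerivAt F (g t) t) (hg : Tendsto g atTop (𝓝 L)) :
    Tendsto (fun t => F t / t) atTop (𝓝 L) := by
  have := ((isLittleO_sub_mul_id_of_hasDerivAt hF hg).tendsto_div_nhds_zero).const_add L
  rw [add_zero] at this
  refine this.congr' ?_
  filter_upwards [eventually_ne_atTop 0] with t ht
  simp only [id]
  field_simp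
  ring

theorem integrableOn_Ioi_of_continuousOn {f : ℝ → ℝ} {a s t : ℝ} (hf : ContinuousOn f (Ioi a))
    (ht : IntegrableOn f (Ioi t)) (hs : a < s) : IntegrableOn f (Ioi s) := by
  rcases le_total t s with hts | hst
  · exact ht.mono_set (Ioi_subset_Ioi hts)
  · rw [← Ioc_union_Ioi_eq_Ioi hst]
    exact (((hf.mono ((Icc_subset_Ioi_iff hst).2 hs))).integrableOn_Icc.mono_set
      Ioc_subset_Icc_self).union ht

theorem hasDerivAt_integral_Ioi {f : ℝ → ℝ} {a b t : ℝ} (hf : ContinuousOn f (Ioi a))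
    (hint : IntegrableOn f (Ioi b)) (ht : a < t) :
    HasDerivAt (fun s => ∫ τ in Ioi s, f τ) (-f t) t := by
  set c := (a + t) / 2
  have hac : a < c := by simp only [c]; linarith
  have hct : c < t := by simp only [c]; linarith
  have hprim : HasDerivAt (fun s => ∫ τ in c..s, f τ) (f t) t :=
    intervalIntegral.integral_hasDerivAt_right
      ((hf.mono ((Icc_subset_Ioi_iff hct.le).2 hac)).intervalIntegrable_of_Icc hct.le)
      (hf.stronglyMeasurableAtFilter isOpen_Ioi t ht) (hf.continuousAt (Ioi_mem_nhds ht))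
  refine (hprim.const_sub (∫ τ in Ioi c, f τ)).congr_of_eventuallyEq ?_
  filter_upwards [Ioi_mem_nhds hct] with s hs
  rw [← intervalIntegral.integral_Ioi_sub_Ioi (integrableOn_Ioi_of_continuousOn hf hint hac)
    (le_of_lt hs), _root_.sub_sub_cancel]

theorem tendsto_rpow_mul_of_deriv_div_rpow {ψ ψ' : ℝ → ℝ} {p c : ℝ} (hp : 1 < p) (hc : 0 < c)
    (hψ : ∀ᶠ t in atTop, 0 < ψ t) (hderiv : ∀ᶠ t in atTop, HasDerivAt ψ (ψ' t) t)
    (hlim : Tendsto (fun t => ψ' t / ψ t ^ p) atTop (𝓝 (-c))) :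
    Tendsto (fun t => t ^ (p - 1)⁻¹ * ψ t) atTop (𝓝 (((p - 1) * c) ^ (-(p - 1)⁻¹))) := by
  have hF : ∀ᶠ t in atTop,
      HasDerivAt (fun t => ψ t ^ (1 - p)) ((p - 1) * -(ψ' t / ψ t ^ p)) t := by
    filter_upwards [hψ, hderiv] with t hψt hdt
    convert hdt.rpow_const (p := 1 - p) (Or.inl hψt.ne') using 1
    rw [sub_sub_cancel_left, Real.rpow_neg hψt.le]
    ring
  have hFt := tendsto_div_id_of_hasDerivAt hF (by simpa using hlim.neg.const_mul (p - 1))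
  refine ((Real.continuousAt_rpow_const _ _ (Or.inl (by positivity))).tendsto.comp hFt).congr' ?_
  filter_upwards [hψ, eventually_gt_atTop 0] with t hψt ht
  have hp' : (1 - p) * -(p - 1)⁻¹ = 1 := by field_simp [(sub_pos.2 hp).ne']; ring
  rw [Function.comp_apply, Real.div_rpow (by positivity) ht.le, ← Real.rpow_mul hψt.le, hp',
    Real.rpow_one, Real.rpow_neg ht.le, div_inv_eq_mul, mul_comm]

theorem mul_rpow_neg_rpow_neg_inv_div {p x : ℝ} (hp : 1 < p) (hx : 0 < x) :
    ((p - 1) * x ^ (-p)) ^ (-(p - 1)⁻¹) / x = (x / (p - 1)) ^ (p - 1)⁻¹ := by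
  have hp₁ : 0 < p - 1 := sub_pos.2 hp
  have hexp : -p * -(p - 1)⁻¹ = (p - 1)⁻¹ + 1 := by field_simp; ring
  rw [Real.mul_rpow hp₁.le (by positivity), ← Real.rpow_mul hx.le, hexp, Real.rpow_add hx,
    Real.rpow_one, Real.div_rpow hx.le hp₁.le, Real.rpow_neg hp₁.le]
  field_simp

theorem tendsto_rpow_mul_of_integral_Ioi_rpow_div {u : ℝ → ℝ} {a p k : ℝ} (hp : 1 < p)
    (hk : 0 < k) (hu : ContinuousOn u (Ioi a)) (hpos : ∀ᶠ t in atTop, 0 < u t)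
    (hratio : Tendsto (fun t => (∫ τ in Ioi t, u τ ^ p) / u t) atTop (𝓝 k)) :
    Tendsto (fun t => t ^ (p - 1)⁻¹ * u t) atTop (𝓝 ((k / (p - 1)) ^ (p - 1)⁻¹)) := by
  set ψ := fun t => ∫ τ in Ioi t, u τ ^ p
  have hψ : ∀ᶠ t in atTop, 0 < ψ t := by
    filter_upwards [hratio.eventually (lt_mem_nhds hk), hpos] with t h hut
    exact (div_pos_iff_of_pos_right hut).1 h
  obtain ⟨b, hb⟩ := hψ.exists
  -- a non-integrable tail would have the junk integral `0`
  have hint : IntegrableOn (fun τ => u τ ^ p) (Ioi b) := by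
    by_contra h
    exact hb.ne' (integral_undef h)
  have hderiv : ∀ᶠ t in atTop, HasDerivAt ψ (-(u t ^ p)) t := by
    filter_upwards [eventually_gt_atTop a] with t ht using
      hasDerivAt_integral_Ioi (hu.rpow_const fun _ _ => Or.inr (by linarith)) hint ht
  have hlim : Tendsto (fun t => -(u t ^ p) / ψ t ^ p) atTop (𝓝 (-(k ^ (-p)))) := by
    refine ((Real.continuousAt_rpow_const _ _ (Or.inl hk.ne')).tendsto.comp hratio).neg.congr' ?_
    filter_upwards [hψ, hpos] with t hψt hut
    rw [Function.comp_apply, Real.rpow_neg (div_pos hψt hut).le, Real.div_rpow hψt.le hut.le,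
      inv_div, neg_div]
  have := (tendsto_rpow_mul_of_deriv_div_rpow hp (by positivity) hψ hderiv hlim).div hratio hk.ne'
  rw [mul_rpow_neg_rpow_neg_inv_div hp hk] at this
  refine this.congr' ?_
  filter_upwards [hψ, hpos] with t hψt hut
  change t ^ (p - 1)⁻¹ * ψ t / (ψ t / u t) = _
  field_simp

theorem stmt15_general (d : ℕ) (hd : 3 ≤ d) (γ : ℝ) (hγ : -2 < γ)
    (u u' : ℝ → ℝ)
    (hpos : ∀ t ∈ Set.Ioi (0:ℝ), 0 < u t)
    (hu' : ∀ t ∈ Set.Ioi (0:ℝ), HasDerivAt u (u' t) t)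
    (hie : ∀ t ∈ Set.Ioi (0:ℝ),
      u' t + ((d:ℝ) - 2) * u t
        = ∫ τ in Set.Ioi t, u τ ^ (((d:ℝ) + γ)/((d:ℝ) - 2)))
    (hrat : Filter.Tendsto (fun t => u' t / u t) Filter.atTop (nhds 0)) :
    Filter.Tendsto (fun t => t ^ (((d:ℝ) - 2)/(2 + γ)) * u t) Filter.atTop
      (nhds ((((d:ℝ) - 2) ^ 2 / (2 + γ)) ^ (((d:ℝ) - 2)/(2 + γ)))) := by
  have hd₂ : (0:ℝ) < d - 2 := by
    have : (3:ℝ) ≤ d := by exact_mod_cast hd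
    linarith
  set p := ((d:ℝ) + γ) / ((d:ℝ) - 2)
  have hp : 1 < p := by rw [lt_div_iff₀ hd₂]; linarith
  have hratio : Tendsto (fun t => (∫ τ in Ioi t, u τ ^ p) / u t) atTop (𝓝 ((d:ℝ) - 2)) := by
    refine ((zero_add ((d:ℝ) - 2)) ▸ hrat.add_const ((d:ℝ) - 2)).congr' ?_
    filter_upwards [eventually_gt_atTop 0] with t ht
    rw [← hie t ht, add_div, mul_div_cancel_right₀ _ (hpos t ht).ne']
  have hα : (p - 1)⁻¹ = ((d:ℝ) - 2) / (2 + γ) := by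
    simp only [p]; field_simp; ring
  have hconst : ((d:ℝ) - 2) / (p - 1) = ((d:ℝ) - 2) ^ 2 / (2 + γ) := by
    simp only [p]; field_simp; ring
  have := tendsto_rpow_mul_of_integral_Ioi_rpow_div hp hd₂
    (fun t ht => (hu' t ht).continuousAt.continuousWithinAt)
    ((eventually_gt_atTop 0).mono hpos) hratio
  rwa [hα, hconst] at this

/-- the sharp logarithmic rate when `u'/u → 0`. -/
theorem stmt15 (d : ℕ) (hd : 3 ≤ d) (γ : ℝ) (hγ : -2 < γ)
    (u u' : ℝ → ℝ)
    (hpos : ∀ t ∈ Set.Ioi (0:ℝ), 0 < u t)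
    (hu' : ∀ t ∈ Set.Ioi (0:ℝ), HasDerivAt u (u' t) t)
    (hu'' : ∀ t ∈ Set.Ioi (0:ℝ), DifferentiableAt ℝ u' t)
    (hu0 : Filter.Tendsto u Filter.atTop (nhds 0))
    (hu'0 : Filter.Tendsto u' Filter.atTop (nhds 0))
    (hie : ∀ t ∈ Set.Ioi (0:ℝ),
      u' t + ((d:ℝ) - 2) * u t
        = ∫ τ in Set.Ioi t, u τ ^ (((d:ℝ) + γ)/((d:ℝ) - 2)))
    (hrat : Filter.Tendsto (fun t => u' t / u t) Filter.atTop (nhds 0)) :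
    Filter.Tendsto (fun t => t ^ (((d:ℝ) - 2)/(2 + γ)) * u t) Filter.atTop
      (nhds ((((d:ℝ) - 2) ^ 2 / (2 + γ)) ^ (((d:ℝ) - 2)/(2 + γ)))) :=
  stmt15_general d hd γ hγ u u' hpos hu' hie hrat
end

section
/- Let $d \ge 3$, $\gamma > -2$, and let $\mathfrak{u}$ be a positive $C^2$ solution on $(0,\infty)$ of $(\mathfrak{u}' + (d-2)\mathfrak{u})' + \mathfrak{u}^{\frac{d+\gamma}{d-2}} = 0$ with $-(d-2) < \mathfrak{u}'/\mathfrak{u} < 0$ everywhere. Set $\mathfrak{w}(\rho) = \mathfrak{u}'(\mathfrak{u}^{-1}(\rho))/\rho$ for $\rho$ in the range of $\mathfrak{u}$ (which is a $C^1$-diffeomorphism onto its image). Then $\mathfrak{w}$ satisfies $\mathfrak{w}'(\rho) = -\frac{\mathfrak{w}(\rho)^2 + (d-2)\mathfrak{w}(\rho) + \rho^{\frac{\gamma+2}{d-2}}}{\rho\, \mathfrak{w}(\rho)}$, and at any $a$ in the range with $\mathfrak{w}'(a) = 0$ one has $\mathfrak{w}''(a) > 0$. Consequently $\mathfrak{w}$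 is monotone near $\rho = 0^+$ and $\lim_{\rho \to 0^+} \mathfrak{w}(\rho)$ exists in $[-(d-2), 0]$. -/
open MeasureTheory Set Filter ENNReal

/-!
Since `u' < 0`, `u` is a local diffeomorphism of `(0, ∞)` onto the open interval `I = u '' (0, ∞)`,
and differentiating `𝔴 (u t) = u' t / u t` along the equation for `u` gives
`𝔴' = -(𝔴² + (d - 2) 𝔴 + ρ ^ E) / (ρ 𝔴)` on `I`, with `E = (γ + 2) / (d - 2) > 0`.
At a critical point `a` the numerator vanishes, so `𝔴''(a) = -E a ^ (E - 1) / (a 𝔴(a)) > 0`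
because `𝔴 < 0`. Every critical point is thus a strict local minimum, and two of them would
enclose a maximum that is itself a critical point; so there is at most one. Below it `𝔴'` does
not vanish, hence (Darboux) `𝔴` is strictly monotone near `0⁺`, and being bounded between
`-(d - 2)` and `0` it has a limit there.
-/

open Topology

theorem HasStrictDerivAt.hasDerivAt_of_eventually_comp_eq {𝕜 : Type*} [NontriviallyNormedField 𝕜]
    [CompleteSpace 𝕜] {f φ ψ : 𝕜 → 𝕜} {f' ψ' a : 𝕜} (hf : HasStrictDerivAt f f' a)
    (hf' : f' ≠ 0) (hψ : HasDerivAt ψ ψ' a) (h : ∀ᶠ x in 𝓝 a, φ (f x) = ψ x) :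
    HasDerivAt φ (ψ' / f') (f a) := by
  set g := hf.localInverse f f' a hf'
  have hg : HasDerivAt g f'⁻¹ (f a) := (hf.to_localInverse hf').hasDerivAt
  have hga : g (f a) = a := HasStrictFDerivAt.localInverse_apply_image _
  have hg_tendsto : Tendsto g (𝓝 (f a)) (𝓝 a) := by
    simpa only [hga] using hg.continuousAt.tendsto
  have hφ : ψ ∘ g =ᶠ[𝓝 (f a)] φ := by
    filter_upwards [hg_tendsto.eventually h, hf.eventually_right_inverse hf'] with y hy hfy
    rw [Function.comp_apply, ← hy, hfy]
  rw [div_eq_mul_inv]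
  exact ((hga ▸ hψ).comp (f a) hg).congr_of_eventuallyEq hφ.symm

theorem isOpen_image_of_hasStrictDerivAt {𝕜 : Type*} [NontriviallyNormedField 𝕜]
    [CompleteSpace 𝕜] {f f' : 𝕜 → 𝕜} {s : Set 𝕜} (hs : IsOpen s)
    (hf : ∀ x ∈ s, HasStrictDerivAt f (f' x) x) (h0 : ∀ x ∈ s, f' x ≠ 0) : IsOpen (f '' s) := by
  refine isOpen_iff_mem_nhds.2 ?_
  rintro _ ⟨x, hx, rfl⟩
  rw [← (hf x hx).map_nhds_eq (h0 x hx)]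
  exact image_mem_map (hs.mem_nhds hx)

theorem eventually_nhdsGT_lt_of_deriv_pos {f : ℝ → ℝ} {a : ℝ} (hc : ContinuousAt f a)
    (h : ∀ᶠ x in 𝓝[>] a, 0 < deriv f x) : ∀ᶠ x in 𝓝[>] a, f a < f x := by
  obtain ⟨b, hab, hb⟩ := mem_nhdsGT_iff_exists_Ioo_subset.1 h
  have hcont : ContinuousOn f (Ico a b) := by
    rintro x ⟨hax, hxb⟩
    rcases hax.eq_or_lt with rfl | hax
    · exact hc.continuousWithinAt
    · exact (differentiableAt_of_deriv_ne_zero (hb ⟨hax, hxb⟩).ne').continuousAt.continuousWithinAt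
  have hmono : StrictMonoOn f (Ico a b) :=
    strictMonoOn_of_deriv_pos (convex_Ico a b) hcont (by rwa [interior_Ico])
  filter_upwards [Ioo_mem_nhdsGT hab] with x hx
  exact hmono (left_mem_Ico.2 hab) (Ioo_subset_Ico_self hx) hx.1

theorem eventually_nhdsLT_lt_of_deriv_neg {f : ℝ → ℝ} {a : ℝ} (hc : ContinuousAt f a)
    (h : ∀ᶠ x in 𝓝[<] a, deriv f x < 0) : ∀ᶠ x in 𝓝[<] a, f a < f x := by
  obtain ⟨b, hba, hb⟩ := mem_nhdsLT_iff_exists_Ioo_subset.1 h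
  have hcont : ContinuousOn f (Ioc b a) := by
    rintro x ⟨hbx, hxa⟩
    rcases hxa.eq_or_lt with rfl | hxa
    · exact hc.continuousWithinAt
    · exact (differentiableAt_of_deriv_ne_zero (hb ⟨hbx, hxa⟩).ne).continuousAt.continuousWithinAt
  have hanti : StrictAntiOn f (Ioc b a) :=
    strictAntiOn_of_deriv_neg (convex_Ioc b a) hcont (by rwa [interior_Ioc])
  filter_upwards [Ioo_mem_nhdsLT hba] with x hx
  exact hanti (Ioo_subset_Ioc_self hx) (right_mem_Ioc.2 hba) hx.2

theorem eventually_nhdsNE_lt_of_deriv_deriv_pos {f : ℝ → ℝ} {a : ℝ}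
    (hf : 0 < deriv (deriv f) a) (hd : deriv f a = 0) (hc : ContinuousAt f a) :
    ∀ᶠ x in 𝓝[≠] a, f a < f x := by
  have hsign : ∀ᶠ x in 𝓝[≠] a, SignType.sign (deriv f x) = SignType.sign (x - a) :=
    nhdsWithin_le_nhds (eventually_nhdsWithin_sign_eq_of_deriv_pos hf hd)
  rw [← nhdsLT_sup_nhdsGT, eventually_sup]
  exact ⟨eventually_nhdsLT_lt_of_deriv_neg hc (deriv_neg_left_of_sign_deriv hsign),
    eventually_nhdsGT_lt_of_deriv_pos hc (deriv_pos_right_of_sign_deriv hsign)⟩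

theorem Set.OrdConnected.subsingleton_of_deriv_eq_zero_imp {f : ℝ → ℝ} {s : Set ℝ}
    (hs : s.OrdConnected) (hf : ContinuousOn f s)
    (hmin : ∀ x ∈ s, deriv f x = 0 → ∀ᶠ y in 𝓝[≠] x, f x < f y) :
    {x ∈ s | deriv f x = 0}.Subsingleton := by
  intro a ⟨ha, ha0⟩ b ⟨hb, hb0⟩
  wlog hab : a < b generalizing a b
  · rcases (not_lt.1 hab).eq_or_lt with h | h
    · exact h.symm
    · exact (this hb hb0 ha ha0 h).symm
  exfalso
  obtain ⟨c, hc, hmax⟩ := isCompact_Icc.exists_isMaxOn (nonempty_Icc.2 hab.le)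
    (hf.mono (hs.out ha hb))
  have hc0 : deriv f c = 0 := by
    rcases hc.1.eq_or_lt with rfl | hac
    · exact ha0
    rcases hc.2.eq_or_lt with rfl | hcb
    · exact hb0
    exact (hmax.isLocalMax (Icc_mem_nhds hac hcb)).deriv_eq_zero
  have hlt := hmin c (hs.out ha hb hc) hc0
  -- `c` is a strict local minimum, so points of `[a, b]` near `c` lie strictly above the maximum
  have key (l : Filter ℝ) [l.NeBot] (hl : l ≤ 𝓝[≠] c) (hmem : Icc a b ∈ l) : False := by
    obtain ⟨y, hy, hyab⟩ := ((show ∀ᶠ y in l, f c < f y from hl hlt).and hmem).exists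
    exact (hmax hyab).not_gt hy
  rcases hc.2.lt_or_eq with hcb | rfl
  · exact key (𝓝[>] c) (nhdsGT_le_nhdsNE c) (Icc_mem_nhdsGT_of_mem ⟨hc.1, hcb⟩)
  · exact key (𝓝[<] c) (nhdsLT_le_nhdsNE c) (Icc_mem_nhdsLT hab)

theorem Convex.strictMonoOn_or_strictAntiOn_of_deriv_ne_zero {f : ℝ → ℝ} {s : Set ℝ}
    (hs : Convex ℝ s) (hs' : IsOpen s) (hf : DifferentiableOn ℝ f s)
    (h0 : ∀ x ∈ s, deriv f x ≠ 0) : StrictMonoOn f s ∨ StrictAntiOn f s := by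
  have hderiv : ∀ x ∈ s, HasDerivWithinAt f (deriv f x) s x := fun x hx =>
    ((hf x hx).differentiableAt (hs'.mem_nhds hx)).hasDerivAt.hasDerivWithinAt
  rcases hasDerivWithinAt_forall_lt_or_forall_gt_of_forall_ne hs hderiv h0 with hneg | hpos
  · exact .inr (strictAntiOn_of_deriv_neg hs hf.continuousOn (by rwa [hs'.interior_eq]))
  · exact .inl (strictMonoOn_of_deriv_pos hs hf.continuousOn (by rwa [hs'.interior_eq]))

theorem Set.OrdConnected.exists_strictMonoOn_or_strictAntiOn_Ioo {f : ℝ → ℝ} {s : Set ℝ} {a : ℝ}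
    (hs : s.OrdConnected) (hs' : IsOpen s) (hsa : s ⊆ Ioi a) (hf : DifferentiableOn ℝ f s)
    (hcrit : ∀ x ∈ s, deriv f x = 0 → 0 < deriv (deriv f) x) :
    ∃ b > a, StrictMonoOn f (s ∩ Ioo a b) ∨ StrictAntiOn f (s ∩ Ioo a b) := by
  have hunique : {x ∈ s | deriv f x = 0}.Subsingleton :=
    hs.subsingleton_of_deriv_eq_zero_imp hf.continuousOn fun x hx hx0 =>
      eventually_nhdsNE_lt_of_deriv_deriv_pos (hcrit x hx hx0) hx0
        (hf.continuousOn.continuousAt (hs'.mem_nhds hx))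
  obtain ⟨b, hab, hb⟩ : ∃ b > a, ∀ x ∈ s ∩ Ioo a b, deriv f x ≠ 0 := by
    by_cases hex : ∃ c ∈ s, deriv f c = 0
    · obtain ⟨c, hc, hc0⟩ := hex
      exact ⟨c, hsa hc, fun x hx hx0 => hx.2.2.ne (hunique ⟨hx.1, hx0⟩ ⟨hc, hc0⟩)⟩
    · push Not at hex
      exact ⟨a + 1, by linarith, fun x hx => hex x hx.1⟩
  exact ⟨b, hab, ((hs.inter ordConnected_Ioo).convex).strictMonoOn_or_strictAntiOn_of_deriv_ne_zero
    (hs'.inter isOpen_Ioo) (hf.mono inter_subset_left) hb⟩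

theorem MonotoneOn.exists_tendsto_nhdsWithin {α β : Type*} [LinearOrder α] [TopologicalSpace α]
    [OrderTopology α] [ConditionallyCompleteLinearOrder β] [TopologicalSpace β] [OrderTopology β]
    {f : α → β} {s : Set α} {a : α} (hs : s.OrdConnected) (hsa : s ⊆ Ioi a)
    (hf : MonotoneOn f s) (hb : BddBelow (f '' s)) : ∃ m, Tendsto f (𝓝[s] a) (𝓝 m) := by
  by_cases hne : (𝓝[s] a).NeBot
  · have below (x : α) (hx : a < x) : ∃ z ∈ s, z < x :=
      hne.nonempty_of_mem (inter_mem_nhdsWithin s (Iio_mem_nhds hx))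
    obtain ⟨x, hx⟩ := hne.nonempty_of_mem self_mem_nhdsWithin
    have hsub : Ioo a x ⊆ s := fun y hy =>
      let ⟨z, hz, hzy⟩ := below y hy.1
      hs.out hz hx ⟨hzy.le, hy.2.le⟩
    have hIoo : (Ioo a x).Nonempty :=
      let ⟨z, hz, hzx⟩ := below x (hsa hx)
      ⟨z, hsa hz, hzx⟩
    exact ⟨_, ((hf.mono hsub).tendsto_nhdsWithin_Ioo_right hIoo
      (hb.mono (image_mono hsub))).mono_left (nhdsWithin_mono a hsa)⟩
  · obtain ⟨m, -⟩ := hb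
    exact ⟨m, by rw [not_neBot.1 hne]; exact tendsto_bot⟩

theorem AntitoneOn.exists_tendsto_nhdsWithin {α β : Type*} [LinearOrder α] [TopologicalSpace α]
    [OrderTopology α] [ConditionallyCompleteLinearOrder β] [TopologicalSpace β] [OrderTopology β]
    {f : α → β} {s : Set α} {a : α} (hs : s.OrdConnected) (hsa : s ⊆ Ioi a)
    (hf : AntitoneOn f s) (hb : BddAbove (f '' s)) : ∃ m, Tendsto f (𝓝[s] a) (𝓝 m) :=
  MonotoneOn.exists_tendsto_nhdsWithin (β := βᵒᵈ) hs hsa hf.dual_right hb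

theorem Filter.Tendsto.exists_mem_of_isClosed {α β : Type*} [TopologicalSpace β] {f : α → β}
    {l : Filter α} {m : β} {K : Set β} (h : Tendsto f l (𝓝 m)) (hK : IsClosed K)
    (hK' : K.Nonempty) (hfK : ∀ᶠ x in l, f x ∈ K) : ∃ m' ∈ K, Tendsto f l (𝓝 m') := by
  by_cases hl : l.NeBot
  · exact ⟨m, hK.mem_of_tendsto h hfK, h⟩
  · rw [not_neBot.1 hl]
    exact ⟨hK'.some, hK'.some_mem, tendsto_bot⟩

theorem Set.OrdConnected.exists_mem_tendsto_nhdsWithin {α β : Type*} [LinearOrder α]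
    [TopologicalSpace α] [OrderTopology α] [ConditionallyCompleteLinearOrder β]
    [TopologicalSpace β] [OrderTopology β] {f : α → β} {s : Set α} {a b : α} {K : Set β}
    (hs : s.OrdConnected) (hsa : s ⊆ Ioi a) (hab : a < b)
    (hf : MonotoneOn f (s ∩ Ioo a b) ∨ AntitoneOn f (s ∩ Ioo a b)) (hK : IsCompact K)
    (hK' : K.Nonempty) (hfK : MapsTo f s K) : ∃ m ∈ K, Tendsto f (𝓝[s] a) (𝓝 m) := by
  have hJ : (s ∩ Ioo a b).OrdConnected := hs.inter ordConnected_Ioo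
  have hJa : s ∩ Ioo a b ⊆ Ioi a := inter_subset_right.trans Ioo_subset_Ioi_self
  have hJK : f '' (s ∩ Ioo a b) ⊆ K := (hfK.mono_left inter_subset_left).image_subset
  obtain ⟨m, hm⟩ : ∃ m, Tendsto f (𝓝[s ∩ Ioo a b] a) (𝓝 m) := hf.elim
    (fun h => h.exists_tendsto_nhdsWithin hJ hJa (hK.bddBelow.mono hJK))
    (fun h => h.exists_tendsto_nhdsWithin hJ hJa (hK.bddAbove.mono hJK))
  rw [nhdsWithin_inter_of_mem' (nhdsWithin_mono a hsa (Ioo_mem_nhdsGT hab))] at hm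
  exact hm.exists_mem_of_isClosed hK.isClosed hK' (eventually_nhdsWithin_of_forall hfK)

/-- With `c = d - 2` and `E = (γ + 2) / (d - 2)`, the phase-plane function satisfies
`𝔴' = phaseField c E ρ 𝔴`. -/
noncomputable def phaseField (c E ρ y : ℝ) : ℝ := -(y ^ 2 + c * y + ρ ^ E) / (ρ * y)

theorem HasStrictDerivAt.hasDerivAt_phaseField {c E t : ℝ} {u u' u'' w : ℝ → ℝ}
    (hu : HasStrictDerivAt u (u' t) t) (hu' : HasDerivAt u' (u'' t) t) (hpos : 0 < u t)
    (hneg : u' t ≠ 0) (hode : u'' t + c * u' t + u t ^ (E + 1) = 0)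
    (hw : ∀ᶠ s in 𝓝 t, w (u s) = u' s / u s) :
    HasDerivAt w (phaseField c E (u t) (w (u t))) (u t) := by
  have h := hu.hasDerivAt_of_eventually_comp_eq hneg (hu'.div hu.hasDerivAt hpos.ne') hw
  refine h.congr_deriv ?_
  rw [hw.self_of_nhds, phaseField]
  rw [Real.rpow_add_one hpos.ne'] at hode
  field_simp
  linear_combination (u t) * hode

theorem deriv_deriv_pos_of_hasDerivAt_phaseField {c E a : ℝ} {w : ℝ → ℝ} {s : Set ℝ}
    (hs : IsOpen s) (hE : 0 < E) (hw : ∀ ρ ∈ s, HasDerivAt w (phaseField c E ρ (w ρ)) ρ)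
    (ha : a ∈ s) (ha0 : 0 < a) (hwa : w a < 0) (hcrit : deriv w a = 0) :
    0 < deriv (deriv w) a := by
  have hFa : phaseField c E a (w a) = 0 := (hw a ha).deriv ▸ hcrit
  have hw0 : HasDerivAt w 0 a := hFa ▸ hw a ha
  have hwa0 : w a ≠ 0 := hwa.ne
  have hden : a * w a ≠ 0 := mul_ne_zero ha0.ne' hwa0
  have hnum : w a ^ 2 + c * w a + a ^ E = 0 := by
    rw [phaseField, _root_.div_eq_zero_iff, neg_eq_zero] at hFa
    exact hFa.resolve_right hden
  -- the numerator of `phaseField` vanishes at `a`, so only its own derivative survives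
  have hF : HasDerivAt (fun ρ => phaseField c E ρ (w ρ)) (-(E * a ^ (E - 1)) / (a * w a)) a := by
    have hN := ((hw0.fun_pow 2).fun_add (hw0.const_mul c)).fun_add
      (Real.hasDerivAt_rpow_const (p := E) (Or.inl ha0.ne'))
    refine (hN.fun_neg.fun_div ((hasDerivAt_id' a).fun_mul hw0) hden).congr_deriv ?_
    rw [hnum]
    field_simp
    ring
  have hderiv : deriv w =ᶠ[𝓝 a] fun ρ => phaseField c E ρ (w ρ) := by
    filter_upwards [hs.mem_nhds ha] with ρ hρ using (hw ρ hρ).deriv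
  rw [hderiv.deriv_eq, hF.deriv]
  exact div_pos_of_neg_of_neg (neg_neg_of_pos (mul_pos hE (Real.rpow_pos_of_pos ha0 _)))
    (mul_neg_of_pos_of_neg ha0 hwa)

/-- the phase-plane function `𝔴(ρ) = u'(u⁻¹(ρ))/ρ`: its ODE, the sign of `𝔴''`
at critical points, eventual monotonicity near `ρ = 0⁺` and existence of the limit. -/
theorem stmt16 (d : ℕ) (hd : 3 ≤ d) (γ : ℝ) (hγ : -2 < γ)
    (u u' u'' : ℝ → ℝ) (w : ℝ → ℝ)
    (hpos : ∀ t ∈ Set.Ioi (0:ℝ), 0 < u t)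
    (hu' : ∀ t ∈ Set.Ioi (0:ℝ), HasDerivAt u (u' t) t)
    (hu'' : ∀ t ∈ Set.Ioi (0:ℝ), HasDerivAt u' (u'' t) t)
    (hode : ∀ t ∈ Set.Ioi (0:ℝ),
      u'' t + ((d:ℝ) - 2) * u' t + u t ^ (((d:ℝ) + γ)/((d:ℝ) - 2)) = 0)
    (hbound : ∀ t ∈ Set.Ioi (0:ℝ),
      -((d:ℝ) - 2) < u' t / u t ∧ u' t / u t < 0)
    (hw : ∀ t ∈ Set.Ioi (0:ℝ), w (u t) = u' t / u t) :
    (∀ t ∈ Set.Ioi (0:ℝ),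
      HasDerivAt w
        (-((w (u t)) ^ 2 + ((d:ℝ) - 2) * w (u t) + (u t) ^ ((γ + 2)/((d:ℝ) - 2)))
          / (u t * w (u t))) (u t)) ∧
    (∀ t ∈ Set.Ioi (0:ℝ), deriv w (u t) = 0 → 0 < deriv (deriv w) (u t)) ∧
    (∃ ρ₀ > (0:ℝ),
      MonotoneOn w (u '' Set.Ioi 0 ∩ Set.Ioo 0 ρ₀)
      ∨ AntitoneOn w (u '' Set.Ioi 0 ∩ Set.Ioo 0 ρ₀)) ∧
    (∃ m ∈ Set.Icc (-((d:ℝ) - 2)) (0:ℝ),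
      Filter.Tendsto w (nhdsWithin 0 (u '' Set.Ioi 0)) (nhds m)) := by
  have hd2 : (0:ℝ) < d - 2 := by linarith [show (3:ℝ) ≤ d by exact_mod_cast hd]
  have hu'_neg (t : ℝ) (ht : t ∈ Ioi (0:ℝ)) : u' t < 0 := by
    simpa using (div_lt_iff₀ (hpos t ht)).1 (hbound t ht).2
  have hstrict (t : ℝ) (ht : t ∈ Ioi (0:ℝ)) : HasStrictDerivAt u (u' t) t :=
    hasStrictDerivAt_of_hasDerivAt_of_continuousAt
      (eventually_of_mem (Ioi_mem_nhds ht) hu') (hu'' t ht).continuousAt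
  have hw_deriv : ∀ ρ ∈ u '' Ioi 0,
      HasDerivAt w (phaseField (d - 2) ((γ + 2) / (d - 2)) ρ (w ρ)) ρ := by
    refine forall_mem_image.2 fun t ht => (hstrict t ht).hasDerivAt_phaseField (hu'' t ht)
      (hpos t ht) (hu'_neg t ht).ne ?_ (eventually_of_mem (Ioi_mem_nhds ht) hw)
    rw [show (γ + 2) / ((d:ℝ) - 2) + 1 = (d + γ) / (d - 2) by field_simp; ring]
    exact hode t ht
  have hopen : IsOpen (u '' Ioi 0) :=
    isOpen_image_of_hasStrictDerivAt isOpen_Ioi hstrict fun t ht => (hu'_neg t ht).ne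
  have hconn : (u '' Ioi 0).OrdConnected := (isPreconnected_Ioi.image u fun t ht =>
    (hu' t ht).continuousAt.continuousWithinAt).ordConnected
  have hw_mem : MapsTo w (u '' Ioi 0) (Ioo (-((d:ℝ) - 2)) 0) := by
    rintro _ ⟨t, ht, rfl⟩
    rw [hw t ht]
    exact hbound t ht
  have hcrit : ∀ ρ ∈ u '' Ioi 0, deriv w ρ = 0 → 0 < deriv (deriv w) ρ := fun ρ hρ =>
    deriv_deriv_pos_of_hasDerivAt_phaseField hopen (div_pos (by linarith) hd2) hw_deriv hρ
      (image_subset_iff.2 hpos hρ) (hw_mem hρ).2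
  obtain ⟨ρ₀, hρ₀, hstrict_mono⟩ := hconn.exists_strictMonoOn_or_strictAntiOn_Ioo hopen
    (image_subset_iff.2 hpos) (fun ρ hρ => (hw_deriv ρ hρ).differentiableAt.differentiableWithinAt)
    hcrit
  have hmono := hstrict_mono.imp StrictMonoOn.monotoneOn StrictAntiOn.antitoneOn
  refine ⟨forall_mem_image.1 hw_deriv, fun t ht => hcrit _ (mem_image_of_mem u ht),
    ⟨ρ₀, hρ₀, hmono⟩, ?_⟩
  exact hconn.exists_mem_tendsto_nhdsWithin (image_subset_iff.2 hpos) hρ₀ hmono isCompact_Icc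
    (nonempty_Icc.2 (by linarith)) (hw_mem.mono_right Ioo_subset_Icc_self)
end
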